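/- Let H be a quaternion division algebra over F (char F ≠ 2) and h a nondegenerate hermitian form of rank m over (H, ‾) with trace form q_h (a 4m-dimensional F-quadratic form). Then i_w(q_h) = 4·i_w(h). -/

import Mathlib

/-!
Witt decomposition: a nondegenerate hermitian space over the division algebra `H` is the
orthogonal sum of `K` hyperbolic planes `(vᵢ, uᵢ)` and an anisotropic part, so the `vᵢ` span a
totally isotropic `H`-subspace of `F`-dimension `4K`. For the other inequality let `ω`, `τ` be
`F`-bases of `H` dual for the polar form `Re (c̄ d + d̄ c)` of the reduced norm: then the vectors
`ωₛ vᵢ`, `τₜ uᵢ` form `4K` hyperbolic planes of `q_h`, orthogonal to the anisotropic part, on which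
`q_h` stays anisotropic because `h(x, x)` lies in `F`. Splitting off one hyperbolic plane at a
time bounds every totally isotropic subspace of `q_h` by `4K`.
-/

open Module Submodule Quaternion

namespace Submodule

variable {K E : Type*} [DivisionRing K] [AddCommGroup E] [Module K E] [FiniteDimensional K E]

lemma finrank_le_finrank_inf_ker_add_one (W : Submodule K E) (φ : E →ₗ[K] K) :
    finrank K W ≤ finrank K ↥(W ⊓ LinearMap.ker φ) + 1 := by
  have hsup := finrank_sup_add_finrank_inf_eq W (LinearMap.ker φ)
  have hrank := φ.finrank_range_add_finrank_ker
  have hle := finrank_le (W ⊔ LinearMap.ker φ)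
  have hrange : finrank K (LinearMap.range φ) ≤ 1 := (finrank_le _).trans (finrank_self K).le
  omega

lemma finrank_le_finrank_map_add_finrank_inf_ker (U : Submodule K E) (π : E →ₗ[K] E) :
    finrank K U ≤ finrank K ↥(U.map π) + finrank K ↥(U ⊓ LinearMap.ker π) := by
  have hrank := (π.domRestrict U).finrank_range_add_finrank_ker
  rw [LinearMap.range_domRestrict, LinearMap.ker_domRestrict, ← finrank_map_subtype_eq,
    map_comap_subtype] at hrank
  omega

end Submodule

namespace QuadraticMap

variable {F E : Type*} [Field F] [AddCommGroup E] [Module F E] {Q : QuadraticForm F E}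

variable (Q) in
structure IsHyperbolicFamily {ι : Type*} [DecidableEq ι] (e f : ι → E) : Prop where
  isotropic_left : ∀ i, Q (e i) = 0
  isotropic_right : ∀ i, Q (f i) = 0
  polar_left : ∀ i j, polar Q (e i) (e j) = 0
  polar_right : ∀ i j, polar Q (f i) (f j) = 0
  polar_left_right : ∀ i j, polar Q (e i) (f j) = if i = j then 1 else 0

variable (Q) in
/-- The projection onto the orthogonal complement of the hyperbolic plane spanned by `e`, `f`
(when `Q e = Q f = 0` and `polar Q e f = 1`). -/
def hyperbolicProj (e f : E) : E →ₗ[F] E :=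
  LinearMap.id - (polarBilin Q f).smulRight e - (polarBilin Q e).smulRight f

lemma hyperbolicProj_apply (e f x : E) :
    hyperbolicProj Q e f x = x - polar Q f x • e - polar Q e x • f := rfl

lemma polar_eq_zero_of_isotropic {W : Submodule F E} (hW : ∀ x ∈ W, Q x = 0)
    {x y : E} (hx : x ∈ W) (hy : y ∈ W) : polar Q x y = 0 := by
  simp [polar, hW _ (W.add_mem hx hy), hW x hx, hW y hy]

section Step

variable {e f : E} {W : Submodule F E}

lemma isotropic_map_hyperbolicProj (he : Q e = 0) (hW : ∀ x ∈ W, Q x = 0) :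
    ∀ x ∈ (W ⊓ LinearMap.ker (polarBilin Q e)).map (hyperbolicProj Q e f), Q x = 0 := by
  rintro _ ⟨y, ⟨hyW, hye : polar Q e y = 0⟩, rfl⟩
  have hproj : hyperbolicProj Q e f y = y + (-polar Q f y) • e := by
    rw [hyperbolicProj_apply, hye, zero_smul, sub_zero, neg_smul, sub_eq_add_neg]
  rw [hproj, QuadraticMap.map_add (⇑Q), QuadraticMap.map_smul, he, hW y hyW, polar_smul_right,
    polar_comm (⇑Q) y e, hye]
  simp

lemma finrank_le_finrank_map_hyperbolicProj_add_one [FiniteDimensional F E]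
    (hW : ∀ x ∈ W, Q x = 0) :
    finrank F W ≤
      finrank F ↥((W ⊓ LinearMap.ker (polarBilin Q e)).map (hyperbolicProj Q e f)) + 1 := by
  set We := W ⊓ LinearMap.ker (polarBilin Q e)
  have hker : ∀ y ∈ We ⊓ LinearMap.ker (hyperbolicProj Q e f), y = polar Q f y • e := by
    rintro y ⟨⟨-, hye : polar Q e y = 0⟩, hy : hyperbolicProj Q e f y = 0⟩
    rw [hyperbolicProj_apply, hye, zero_smul, sub_zero, sub_eq_zero] at hy
    exact hy
  have hrank := We.finrank_le_finrank_map_add_finrank_inf_ker (hyperbolicProj Q e f)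
  by_cases heW : e ∈ W
  · -- `e` is orthogonal to the isotropic subspace `W`, and the kernel lies on the line `F e`
    have hWe : We = W := inf_eq_left.mpr fun y hy => polar_eq_zero_of_isotropic hW heW hy
    have hline : We ⊓ LinearMap.ker (hyperbolicProj Q e f) ≤ span F {e} := fun y hy =>
      (hker y hy) ▸ smul_mem _ _ (mem_span_singleton_self e)
    have hline_rank : finrank F ↥(We ⊓ LinearMap.ker (hyperbolicProj Q e f)) ≤ 1 :=
      (finrank_mono hline).trans ((finrank_span_le_card ({e} : Set E)).trans (by simp))
    rw [hWe] at hrank hline_rank ⊢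
    omega
  · -- otherwise the projection is injective on `We`, which has codimension at most one in `W`
    have hbot : We ⊓ LinearMap.ker (hyperbolicProj Q e f) = ⊥ := by
      refine eq_bot_iff.mpr fun y hy => ?_
      have hyW : y ∈ W := hy.1.1
      rw [hker y hy] at hyW ⊢
      by_cases hc : polar Q f y = 0
      · simp [hc]
      · exact absurd ((W.smul_mem_iff hc).mp hyW) heW
    rw [hbot, finrank_bot] at hrank
    have hcodim : finrank F W ≤ finrank F We + 1 := W.finrank_le_finrank_inf_ker_add_one _
    omega

end Step

section Family

variable {ι : Type*} [DecidableEq ι] {e f : ι → E} (hef : IsHyperbolicFamily Q e f)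
include hef

lemma IsHyperbolicFamily.hyperbolicProj_apply_left (i j : ι) :
    hyperbolicProj Q (e i) (f i) (e j) = if j = i then 0 else e j := by
  rw [hyperbolicProj_apply, polar_comm, hef.polar_left_right, hef.polar_left]
  by_cases hji : j = i <;> simp [hji]

lemma IsHyperbolicFamily.hyperbolicProj_apply_right (i j : ι) :
    hyperbolicProj Q (e i) (f i) (f j) = if j = i then 0 else f j := by
  rw [hyperbolicProj_apply, hef.polar_right, hef.polar_left_right]
  by_cases hji : j = i
  · simp [hji]
  · simp [hji, Ne.symm hji]

variable {M₀ : Submodule F E} (he₀ : ∀ i, ∀ x ∈ M₀, polar Q (e i) x = 0)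
  (hf₀ : ∀ i, ∀ x ∈ M₀, polar Q (f i) x = 0)
include he₀ hf₀

lemma IsHyperbolicFamily.map_hyperbolicProj_le (i : ι) (s : Finset ι) :
    (M₀ ⊔ span F (e '' ↑(insert i s) ∪ f '' ↑(insert i s))).map (hyperbolicProj Q (e i) (f i))
      ≤ M₀ ⊔ span F (e '' ↑s ∪ f '' ↑s) := by
  rw [map_le_iff_le_comap]
  refine sup_le (fun x hx => ?_) (span_le.mpr ?_)
  · rw [mem_comap, hyperbolicProj_apply, hf₀ i x hx, he₀ i x hx, zero_smul, zero_smul, sub_zero,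
      sub_zero]
    exact mem_sup_left hx
  · have hmem : ∀ {j}, j ∈ insert i s → j ≠ i → j ∈ s := fun hj hji =>
      (Finset.mem_insert.mp hj).resolve_left hji
    rintro _ (⟨j, hj, rfl⟩ | ⟨j, hj, rfl⟩) <;>
      simp only [SetLike.mem_coe, mem_comap, hef.hyperbolicProj_apply_left,
        hef.hyperbolicProj_apply_right] <;>
      split_ifs with hji
    all_goals first
      | exact zero_mem _
      | exact mem_sup_right (subset_span (Or.inl ⟨j, hmem hj hji, rfl⟩))
      | exact mem_sup_right (subset_span (Or.inr ⟨j, hmem hj hji, rfl⟩))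

theorem IsHyperbolicFamily.finrank_le_card [FiniteDimensional F E]
    (hM₀ : ∀ x ∈ M₀, Q x = 0 → x = 0) (s : Finset ι) {W : Submodule F E}
    (hW : ∀ x ∈ W, Q x = 0) (hWs : W ≤ M₀ ⊔ span F (e '' ↑s ∪ f '' ↑s)) :
    finrank F W ≤ s.card := by
  induction s using Finset.induction_on generalizing W with
  | empty =>
    have hbot : W = ⊥ := by
      refine eq_bot_iff.mpr fun x hx => ?_
      have hxM₀ : x ∈ M₀ := by simpa using hWs hx
      exact (mem_bot F).mpr (hM₀ x hxM₀ (hW x hx))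
    simp [hbot]
  | @insert i s hi ih =>
    calc finrank F W
        ≤ finrank F ↥((W ⊓ LinearMap.ker (polarBilin Q (e i))).map
            (hyperbolicProj Q (e i) (f i))) + 1 :=
          finrank_le_finrank_map_hyperbolicProj_add_one hW
      _ ≤ s.card + 1 := by
          gcongr
          exact ih (isotropic_map_hyperbolicProj (hef.isotropic_left i) hW)
            ((map_mono (inf_le_left.trans hWs)).trans (hef.map_hyperbolicProj_le he₀ hf₀ i s))
      _ = (insert i s).card := (Finset.card_insert_of_notMem hi).symm

end Family

end QuadraticMap

section HermitianForm

variable {R M : Type*} [Ring R] [StarRing R] [AddCommGroup M] [Module R M]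

structure IsHermitianForm (h : M → M → R) : Prop where
  add_left : ∀ x x' y, h (x + x') y = h x y + h x' y
  smul_left : ∀ (c : R) (x y), h (c • x) y = star c * h x y
  conj_symm : ∀ x y, h y x = star (h x y)

namespace IsHermitianForm

variable {h : M → M → R} (hh : IsHermitianForm h)
include hh

lemma add_right (x y y' : M) : h x (y + y') = h x y + h x y' := by
  rw [hh.conj_symm, hh.add_left, star_add, ← hh.conj_symm, ← hh.conj_symm]

lemma smul_right (c : R) (x y : M) : h x (c • y) = h x y * c := by
  rw [hh.conj_symm, hh.smul_left, star_mul, star_star, ← hh.conj_symm]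

def leftHom (y : M) : M →+ R := AddMonoidHom.mk' (h · y) (hh.add_left · · y)

def rightHom (x : M) : M →+ R := AddMonoidHom.mk' (h x) (hh.add_right x)

lemma zero_left (y : M) : h 0 y = 0 := map_zero (hh.leftHom y)

lemma zero_right (x : M) : h x 0 = 0 := map_zero (hh.rightHom x)

lemma sub_left (x x' y : M) : h (x - x') y = h x y - h x' y := map_sub (hh.leftHom y) x x'

lemma sub_right (x y y' : M) : h x (y - y') = h x y - h x y' := map_sub (hh.rightHom x) y y'

lemma sum_left {ι : Type*} (s : Finset ι) (x : ι → M) (y : M) :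
    h (∑ i ∈ s, x i) y = ∑ i ∈ s, h (x i) y := map_sum (hh.leftHom y) x s

lemma sum_right {ι : Type*} (s : Finset ι) (x : M) (y : ι → M) :
    h x (∑ i ∈ s, y i) = ∑ i ∈ s, h x (y i) := map_sum (hh.rightHom x) y s

lemma eq_zero_comm {x y : M} : h x y = 0 ↔ h y x = 0 := by
  rw [hh.conj_symm x, star_eq_zero]

def orthogonal (S : Set M) : Submodule R M where
  carrier := {x | ∀ y ∈ S, h y x = 0}
  add_mem' hx hx' y hy := by rw [hh.add_right, hx y hy, hx' y hy, add_zero]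
  zero_mem' y _ := hh.zero_right y
  smul_mem' c x hx y hy := by rw [hh.smul_right, hx y hy, zero_mul]

lemma orthogonal_span (S : Set M) : hh.orthogonal (span R S) = hh.orthogonal S := by
  refine le_antisymm (fun x hx y hy => hx y (subset_span hy)) fun x hx y hy => ?_
  induction hy using span_induction with
  | mem y hy => exact hx y hy
  | zero => exact hh.zero_left x
  | add y y' _ _ hy hy' => rw [hh.add_left, hy, hy', add_zero]
  | smul c y _ hy => rw [hh.smul_left, hy, mul_zero]

lemma isotropic_span {S : Set M} (hS : ∀ x ∈ S, ∀ y ∈ S, h x y = 0) :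
    ∀ x ∈ span R S, ∀ y ∈ span R S, h x y = 0 := by
  have hle : span R S ≤ hh.orthogonal (span R S) := by
    rw [orthogonal_span, span_le]
    exact fun y hy x hx => hS x hx y hy
  exact fun x hx y hy => hle hy x hx

variable (h) in
structure IsHyperbolicFamily {ι : Type*} [DecidableEq ι] (v u : ι → M) : Prop where
  isotropic_left : ∀ s t, h (v s) (v t) = 0
  isotropic_right : ∀ s t, h (u s) (u t) = 0
  apply_left_right : ∀ s t, h (v s) (u t) = if s = t then 1 else 0

variable {ι : Type*} [DecidableEq ι] {v u : ι → M}

lemma IsHyperbolicFamily.apply_right_left (hvu : IsHyperbolicFamily h v u) (s t : ι) :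
    h (u s) (v t) = if s = t then 1 else 0 := by
  rw [hh.conj_symm, hvu.apply_left_right]
  by_cases hst : s = t
  · simp [hst]
  · simp [hst, Ne.symm hst]

lemma IsHyperbolicFamily.linearIndependent_left (hvu : IsHyperbolicFamily h v u) :
    LinearIndependent R v := by
  refine linearIndependent_iff'.mpr fun s g hg t ht => ?_
  have hpair : h (∑ i ∈ s, g i • v i) (u t) = star (g t) := by
    rw [hh.sum_left, Finset.sum_eq_single_of_mem t ht fun i _ hit => ?_, hh.smul_left,
      hvu.apply_left_right, if_pos rfl, mul_one]
    rw [hh.smul_left, hvu.apply_left_right, if_neg hit, mul_zero]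
  rwa [hg, hh.zero_left, eq_comm, star_eq_zero] at hpair

lemma IsHyperbolicFamily.sub_sum_mem_orthogonal [Fintype ι] (hvu : IsHyperbolicFamily h v u)
    (x : M) : x - ∑ j, h (u j) x • v j - ∑ j, h (v j) x • u j ∈
      hh.orthogonal (Set.range v ∪ Set.range u) := by
  rintro _ (⟨i, rfl⟩ | ⟨i, rfl⟩) <;>
    simp [hh.sub_right, hh.sum_right, hh.smul_right, hvu.apply_left_right, hvu.apply_right_left hh,
      hvu.isotropic_left, hvu.isotropic_right]

lemma IsHyperbolicFamily.exists_mem_orthogonal_apply_ne_zero [Fintype ι]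
    (hvu : IsHyperbolicFamily h v u) (hnd : ∀ x, (∀ y, h x y = 0) → x = 0) {x : M}
    (hx : x ∈ hh.orthogonal (Set.range v ∪ Set.range u)) (hx₀ : x ≠ 0) :
    ∃ y ∈ hh.orthogonal (Set.range v ∪ Set.range u), h x y ≠ 0 := by
  obtain ⟨y, hy⟩ : ∃ y, h x y ≠ 0 := by
    by_contra! hall
    exact hx₀ (hnd x hall)
  refine ⟨_, hvu.sub_sum_mem_orthogonal hh y, ?_⟩
  have hxv : ∀ j, h x (v j) = 0 := fun j => hh.eq_zero_comm.mp (hx _ (Or.inl ⟨j, rfl⟩))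
  have hxu : ∀ j, h x (u j) = 0 := fun j => hh.eq_zero_comm.mp (hx _ (Or.inr ⟨j, rfl⟩))
  simpa [hh.sub_right, hh.sum_right, hh.smul_right, hxv, hxu] using hy

lemma IsHyperbolicFamily.cons {K : ℕ} {v u : Fin K → M} (hvu : IsHyperbolicFamily h v u)
    {x y : M} (hx : x ∈ hh.orthogonal (Set.range v ∪ Set.range u))
    (hy : y ∈ hh.orthogonal (Set.range v ∪ Set.range u))
    (hxx : h x x = 0) (hyy : h y y = 0) (hxy : h x y = 1) :
    IsHyperbolicFamily h (Fin.cons x v) (Fin.cons y u) := by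
  have hv : ∀ z ∈ hh.orthogonal (Set.range v ∪ Set.range u), ∀ j, h (v j) z = 0 ∧ h z (v j) = 0 :=
    fun z hz j => ⟨hz _ (Or.inl ⟨j, rfl⟩), hh.eq_zero_comm.mp (hz _ (Or.inl ⟨j, rfl⟩))⟩
  have hu : ∀ z ∈ hh.orthogonal (Set.range v ∪ Set.range u), ∀ j, h (u j) z = 0 ∧ h z (u j) = 0 :=
    fun z hz j => ⟨hz _ (Or.inr ⟨j, rfl⟩), hh.eq_zero_comm.mp (hz _ (Or.inr ⟨j, rfl⟩))⟩
  refine ⟨?_, ?_, ?_⟩ <;>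
    simp [Fin.forall_fin_succ, (Fin.succ_ne_zero _).symm, hxx, hyy, hxy, hv x hx, hv y hy,
      hu x hx, hu y hy, hvu.isotropic_left, hvu.isotropic_right, hvu.apply_left_right]

end IsHermitianForm

end HermitianForm

namespace IsHermitianForm

variable {R M : Type*} [DivisionRing R] [StarRing R] [AddCommGroup M] [Module R M]
  {h : M → M → R} (hh : IsHermitianForm h)
include hh

lemma exists_hyperbolic_partner (h2 : (2 : R) ≠ 0) {N : Submodule R M} {x y : M}
    (hx : x ∈ N) (hy : y ∈ N) (hxx : h x x = 0) (hxy : h x y ≠ 0) :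
    ∃ z ∈ N, h x z = 1 ∧ h z z = 0 := by
  obtain ⟨y₁, hy₁, hxy₁⟩ : ∃ y₁ ∈ N, h x y₁ = 1 :=
    ⟨(h x y)⁻¹ • y, N.smul_mem _ hy, by rw [hh.smul_right, mul_inv_cancel₀ hxy]⟩
  have hy₁x : h y₁ x = 1 := by rw [hh.conj_symm, hxy₁, star_one]
  -- `h y₁ y₁` is `star`-fixed, so subtracting half of it times `x` makes `y₁` isotropic
  obtain ⟨r, hr⟩ : ∃ r, h y₁ y₁ = r := ⟨_, rfl⟩
  have hhalf : star (r * 2⁻¹) = r * 2⁻¹ := by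
    rw [star_mul, star_inv₀, star_ofNat, ← hr, ← hh.conj_symm]
    exact ((Commute.ofNat_left 2 _).inv_left₀).eq
  refine ⟨y₁ - (r * 2⁻¹) • x, N.sub_mem hy₁ (N.smul_mem _ hx), ?_, ?_⟩
  · rw [hh.sub_right, hh.smul_right, hxx, zero_mul, sub_zero, hxy₁]
  · rw [hh.sub_left, hh.sub_right, hh.sub_right, hh.smul_left, hh.smul_left, hh.smul_right,
      hh.smul_right, hxx, hy₁x, hxy₁, hhalf, hr]
    have h2r : r * 2⁻¹ + r * 2⁻¹ = r := by rw [← mul_add, ← two_mul, mul_inv_cancel₀ h2, mul_one]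
    simp only [one_mul, mul_one, zero_mul, mul_zero, sub_zero]
    rw [sub_sub, h2r, sub_self]

theorem exists_isHyperbolicFamily_anisotropic [FiniteDimensional R M] (h2 : (2 : R) ≠ 0)
    (hnd : ∀ x, (∀ y, h x y = 0) → x = 0) :
    ∃ (K : ℕ) (v u : Fin K → M), IsHyperbolicFamily h v u ∧
      ∀ x ∈ hh.orthogonal (Set.range v ∪ Set.range u), h x x = 0 → x = 0 := by
  by_contra! hne
  -- otherwise hyperbolic families could be extended forever, contradicting finite dimension
  have hfam : ∀ K, ∃ v u : Fin K → M, IsHyperbolicFamily h v u := by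
    intro K
    induction K with
    | zero => exact ⟨Fin.elim0, Fin.elim0, ⟨fun s => s.elim0, fun s => s.elim0, fun s => s.elim0⟩⟩
    | succ K ih =>
      obtain ⟨v, u, hvu⟩ := ih
      obtain ⟨x, hx, hxx, hx₀⟩ := hne K v u hvu
      obtain ⟨y, hy, hxy⟩ := hvu.exists_mem_orthogonal_apply_ne_zero hh hnd hx hx₀
      obtain ⟨z, hz, hxz, hzz⟩ := hh.exists_hyperbolic_partner h2 hx hy hxx hxy
      exact ⟨_, _, hvu.cons hh hx hz hxx hzz hxz⟩
  obtain ⟨v, u, hvu⟩ := hfam (finrank R M + 1)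
  have hcard := (hvu.linearIndependent_left hh).fintype_card_le_finrank
  simp at hcard

lemma IsHyperbolicFamily.exists_isotropic_submodule {ι : Type*} [DecidableEq ι] [Fintype ι]
    {v u : ι → M} (hvu : IsHyperbolicFamily h v u) :
    ∃ W : Submodule R M, (∀ x ∈ W, ∀ y ∈ W, h x y = 0) ∧ finrank R W = Fintype.card ι :=
  ⟨span R (Set.range v),
    hh.isotropic_span (by rintro _ ⟨s, rfl⟩ _ ⟨t, rfl⟩; exact hvu.isotropic_left s t),
    finrank_span_eq_card (hvu.linearIndependent_left hh)⟩

end IsHermitianForm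

namespace QuaternionAlgebra

variable {F : Type*} [Field F] {a b : F}

lemma eq_coe_re_of_star_eq_self (h2 : (2 : F) ≠ 0) {x : ℍ[F,a,b]} (hx : star x = x) :
    x = x.re := by
  have hneg : ∀ t : F, -t = t → t = 0 := fun t ht =>
    (mul_eq_zero.mp (by linear_combination -ht : (2 : F) * t = 0)).resolve_left h2
  have hI := hneg _ (by simpa using congrArg imI hx)
  have hJ := hneg _ (by simpa using congrArg imJ hx)
  have hK := hneg _ (by simpa using congrArg imK hx)
  ext <;> simp [hI, hJ, hK]

variable (F a b) in
/-- The polar form of the reduced norm. -/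
def tracePairing : LinearMap.BilinForm F ℍ[F,a,b] :=
  LinearMap.mk₂ F (fun c d => (star c * d + star d * c).re)
    (fun c c' d => by simp only [star_add, add_mul, mul_add, re_add]; ring)
    (fun r c d => by simp only [star_smul, smul_mul_assoc, mul_smul_comm, ← smul_add,
      re_smul])
    (fun c d d' => by simp only [star_add, add_mul, mul_add, re_add]; ring)
    (fun r c d => by simp only [star_smul, smul_mul_assoc, mul_smul_comm, ← smul_add,
      re_smul])

lemma tracePairing_apply (c d : ℍ[F,a,b]) :
    tracePairing F a b c d = (star c * d + star d * c).re := rfl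

lemma tracePairing_isSymm : (tracePairing F a b).IsSymm :=
  ⟨fun c d => by simp only [tracePairing_apply, add_comm]⟩

lemma tracePairing_nondegenerate (h2 : (2 : F) ≠ 0) (ha : a ≠ 0) (hb : b ≠ 0) :
    (tracePairing F a b).Nondegenerate := by
  refine .ofSeparatingLeft fun x hx => ?_
  have h1 := hx 1
  have hi := hx ⟨0, 1, 0, 0⟩
  have hj := hx ⟨0, 0, 1, 0⟩
  have hk := hx ⟨0, 0, 0, 1⟩
  simp only [tracePairing_apply, re_add, re_mul, re_star, imI_star, imJ_star, imK_star, re_one,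
    imI_one, imJ_one, imK_one] at h1 hi hj hk
  have hre : (2 : F) * x.re = 0 := by linear_combination h1
  have hI : 2 * a * x.imI = 0 := by linear_combination -hi
  have hJ : 2 * b * x.imJ = 0 := by linear_combination -hj
  have hK : 2 * (a * b) * x.imK = 0 := by linear_combination hk
  simp only [mul_eq_zero, h2, ha, hb, false_or] at hre hI hJ hK
  ext <;> simp [hre, hI, hJ, hK]

end QuaternionAlgebra

lemma Module.Basis.smul_mem_span_smul {F A M κ : Type*} [CommSemiring F] [Semiring A]
    [Algebra F A] [AddCommMonoid M] [Module A M] [Module F M] [IsScalarTower F A M] [Fintype κ]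
    (ω : Basis κ F A) (c : A) (v : M) : c • v ∈ span F (Set.range fun s => ω s • v) := by
  rw [← ω.sum_repr c, Finset.sum_smul]
  exact sum_mem fun s _ => smul_assoc (ω.repr c s) (ω s) v ▸
    smul_mem _ _ (subset_span ⟨s, rfl⟩)

namespace IsHermitianForm

variable {F : Type*} [Field F] {a b : F} {M : Type*} [AddCommGroup M] [Module ℍ[F,a,b] M]
  [Module F M] [IsScalarTower F ℍ[F,a,b] M] {h : M → M → ℍ[F,a,b]} (hh : IsHermitianForm h)
include hh

lemma smul_left_of_scalar (r : F) (x y : M) : h (r • x) y = r • h x y := by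
  rw [← algebraMap_smul ℍ[F,a,b] r x, hh.smul_left, QuaternionAlgebra.coe_algebraMap,
    QuaternionAlgebra.star_coe, ← QuaternionAlgebra.coe_algebraMap, Algebra.smul_def]

lemma smul_right_of_scalar (r : F) (x y : M) : h x (r • y) = r • h x y := by
  rw [← algebraMap_smul ℍ[F,a,b] r y, hh.smul_right, Algebra.smul_def, Algebra.commutes]

def traceBilin : LinearMap.BilinForm F M :=
  LinearMap.mk₂ F (fun x y => (h x y).re)
    (fun x x' y => by rw [hh.add_left, QuaternionAlgebra.re_add])
    (fun r x y => by rw [hh.smul_left_of_scalar, QuaternionAlgebra.re_smul])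
    (fun x y y' => by rw [hh.add_right, QuaternionAlgebra.re_add])
    (fun r x y => by rw [hh.smul_right_of_scalar, QuaternionAlgebra.re_smul])

/-- The trace form `q_h(x) = h(x, x)`, which takes values in `F` by hermitian symmetry. -/
def traceForm : QuadraticForm F M := hh.traceBilin.toQuadraticMap

lemma traceForm_apply (x : M) : hh.traceForm x = (h x x).re := rfl

lemma traceForm_eq_zero_iff (h2 : (2 : F) ≠ 0) {x : M} : hh.traceForm x = 0 ↔ h x x = 0 := by
  have hscalar := QuaternionAlgebra.eq_coe_re_of_star_eq_self h2 (hh.conj_symm x x).symm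
  rw [traceForm_apply]
  refine ⟨fun hre => ?_, fun h0 => by rw [h0, QuaternionAlgebra.re_zero]⟩
  rw [hscalar, hre, QuaternionAlgebra.coe_zero]

lemma polar_traceForm (x y : M) :
    QuadraticMap.polar hh.traceForm x y = (h x y + h y x).re := by
  rw [traceForm, LinearMap.BilinMap.polar_toQuadraticMap, QuaternionAlgebra.re_add]
  rfl

lemma polar_traceForm_smul_smul (c d : ℍ[F,a,b]) (x y : M) :
    QuadraticMap.polar hh.traceForm (c • x) (d • y) =
      (star c * h x y * d + star d * h y x * c).re := by
  simp only [polar_traceForm, hh.smul_left, hh.smul_right, mul_assoc]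

variable {ι κ : Type*} [DecidableEq ι] {v u : ι → M}

lemma IsHyperbolicFamily.traceForm [DecidableEq κ] {ω τ : κ → ℍ[F,a,b]}
    (hvu : IsHyperbolicFamily h v u)
    (hωτ : ∀ s t, QuaternionAlgebra.tracePairing F a b (ω s) (τ t) = if s = t then 1 else 0) :
    QuadraticMap.IsHyperbolicFamily hh.traceForm (fun p : ι × κ => ω p.2 • v p.1)
      (fun p => τ p.2 • u p.1) where
  isotropic_left p := by
    rw [traceForm_apply, hh.smul_left, hh.smul_right, hvu.isotropic_left]; simp
  isotropic_right p := by
    rw [traceForm_apply, hh.smul_left, hh.smul_right, hvu.isotropic_right]; simp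
  polar_left p q := by
    rw [hh.polar_traceForm_smul_smul, hvu.isotropic_left, hvu.isotropic_left]; simp
  polar_right p q := by
    rw [hh.polar_traceForm_smul_smul, hvu.isotropic_right, hvu.isotropic_right]; simp
  polar_left_right := by
    rintro ⟨i, s⟩ ⟨j, t⟩
    rw [hh.polar_traceForm_smul_smul, hvu.apply_left_right, hvu.apply_right_left hh]
    by_cases hij : i = j
    · subst hij
      simp only [if_true, mul_one, ← QuaternionAlgebra.tracePairing_apply, hωτ, Prod.mk.injEq,
        true_and]
    · simp [hij, Ne.symm hij]

lemma polar_traceForm_smul_eq_zero {y x : M} (hyx : h y x = 0) (c : ℍ[F,a,b]) :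
    QuadraticMap.polar hh.traceForm (c • y) x = 0 := by
  rw [polar_traceForm, hh.smul_left, hh.smul_right, hyx, hh.eq_zero_comm.mp hyx]
  simp

lemma IsHyperbolicFamily.mem_sup_span_smul [Fintype ι] [Fintype κ]
    (hvu : IsHyperbolicFamily h v u) (ω τ : Basis κ F ℍ[F,a,b]) (x : M) :
    x ∈ (hh.orthogonal (Set.range v ∪ Set.range u)).restrictScalars F ⊔
      span F (Set.range (fun p : ι × κ => ω p.2 • v p.1) ∪
        Set.range (fun p : ι × κ => τ p.2 • u p.1)) := by
  have hx : x = (x - ∑ j, h (u j) x • v j - ∑ j, h (v j) x • u j) +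
      (∑ j, h (u j) x • v j + ∑ j, h (v j) x • u j) := by abel
  rw [hx]
  refine add_mem (mem_sup_left (hvu.sub_sum_mem_orthogonal hh x))
    (mem_sup_right (add_mem (sum_mem fun j _ => ?_) (sum_mem fun j _ => ?_)))
  · refine span_mono ?_ (ω.smul_mem_span_smul _ (v j))
    rintro _ ⟨s, rfl⟩
    exact Or.inl ⟨(j, s), rfl⟩
  · refine span_mono ?_ (τ.smul_mem_span_smul _ (u j))
    rintro _ ⟨s, rfl⟩
    exact Or.inr ⟨(j, s), rfl⟩

theorem finrank_le_of_isHyperbolicFamily [FiniteDimensional F M] (h2 : (2 : F) ≠ 0) (ha : a ≠ 0)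
    (hb : b ≠ 0) [Fintype ι] (hvu : IsHyperbolicFamily h v u)
    (hani : ∀ x ∈ hh.orthogonal (Set.range v ∪ Set.range u), h x x = 0 → x = 0)
    {V : Submodule F M} (hV : ∀ x ∈ V, h x x = 0) :
    finrank F V ≤ 4 * Fintype.card ι := by
  have hT := QuaternionAlgebra.tracePairing_nondegenerate h2 ha hb
  set ω := QuaternionAlgebra.basisOneIJK a 0 b
  set τ := (QuaternionAlgebra.tracePairing F a b).dualBasis hT ω
  have hωτ := LinearMap.BilinForm.apply_dualBasis_right hT QuaternionAlgebra.tracePairing_isSymm ω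
  have hfam := hvu.traceForm hh hωτ
  have horth : ∀ {y}, y ∈ Set.range v ∪ Set.range u →
      ∀ x ∈ (hh.orthogonal (Set.range v ∪ Set.range u)).restrictScalars F, h y x = 0 :=
    fun hy x hx => hx _ hy
  calc finrank F V
      ≤ (Finset.univ : Finset (ι × Fin 4)).card := by
        refine hfam.finrank_le_card
          (fun p x hx => hh.polar_traceForm_smul_eq_zero (horth (Or.inl ⟨p.1, rfl⟩) x hx) _)
          (fun p x hx => hh.polar_traceForm_smul_eq_zero (horth (Or.inr ⟨p.1, rfl⟩) x hx) _)
          (fun x hx hx₀ => hani x hx ((hh.traceForm_eq_zero_iff h2).mp hx₀)) Finset.univ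
          (fun x hx => (hh.traceForm_eq_zero_iff h2).mpr (hV x hx)) fun x _ => ?_
        simpa only [Finset.coe_univ, Set.image_univ] using hvu.mem_sup_span_smul hh ω τ x
    _ = 4 * Fintype.card ι := by simp [mul_comm]

end IsHermitianForm

/-- Let `H = (a,b)_F` be a quaternion division algebra over `F` (char `F ≠ 2`) with its
canonical involution `star`, and let `h` be a nondegenerate hermitian form of rank `m`
over `(H, star)`.  The Witt index of the trace form `q_h(x) = h(x,x)` (a `4m`-dimensional
`F`-quadratic form on `Hᵐ`) equals four times the Witt index of `h`. -/
theorem wittIndex_trace_form_quaternionic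
    (F : Type) [Field F] (h2 : (2 : F) ≠ 0)
    (a b : F) (ha : a ≠ 0) (hb : b ≠ 0)
    (hdiv : ∀ x : QuaternionAlgebra F a 0 b, x ≠ 0 → IsUnit x)
    (m : ℕ) (h : (Fin m → QuaternionAlgebra F a 0 b) → (Fin m → QuaternionAlgebra F a 0 b) →
      QuaternionAlgebra F a 0 b)
    (hadd : ∀ x x' y, h (x + x') y = h x y + h x' y)
    (hsmul : ∀ (c : QuaternionAlgebra F a 0 b) (x y), h (c • x) y = star c * h x y)
    (hherm : ∀ x y, h y x = star (h x y))
    (hnd : ∀ x, (∀ y, h x y = 0) → x = 0) :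
    sSup {r | ∃ W : Submodule F (Fin m → QuaternionAlgebra F a 0 b),
        (∀ x ∈ W, h x x = 0) ∧ Module.finrank F ↥W = r}
      = 4 * sSup {r | ∃ W : Submodule (QuaternionAlgebra F a 0 b)
            (Fin m → QuaternionAlgebra F a 0 b),
          (∀ x ∈ W, ∀ y ∈ W, h x y = 0) ∧
          Module.finrank (QuaternionAlgebra F a 0 b) ↥W = r} := by
  let _ : DivisionRing ℍ[F,a,b] :=
    .ofIsUnitOrEqZero fun x => (em (x = 0)).elim Or.inr fun hx => Or.inl (hdiv x hx)
  have hh : IsHermitianForm h := ⟨hadd, hsmul, hherm⟩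
  have h2' : (2 : ℍ[F,a,b]) ≠ 0 := fun h0 =>
    h2 (QuaternionAlgebra.coe_injective ((QuaternionAlgebra.coe_ofNat (n := 2)).trans h0))
  obtain ⟨K, v, u, hvu, hani⟩ := hh.exists_isHyperbolicFamily_anisotropic h2' hnd
  obtain ⟨W₀, hW₀, hW₀K⟩ := hvu.exists_isotropic_submodule hh
  have hbound : ∀ V : Submodule F (Fin m → ℍ[F,a,b]), (∀ x ∈ V, h x x = 0) → finrank F V ≤ 4 * K :=
    fun V hV => by simpa using hh.finrank_le_of_isHyperbolicFamily h2 ha hb hvu hani hV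
  have hrestrict (W : Submodule ℍ[F,a,b] (Fin m → ℍ[F,a,b])) :
      finrank F (W.restrictScalars F) = 4 * finrank ℍ[F,a,b] W := by
    rw [← QuaternionAlgebra.finrank_eq_four a 0 b, ← (restrictScalarsEquiv F _ _ W).finrank_eq,
      finrank_mul_finrank]
  rw [IsGreatest.csSup_eq (a := 4 * K), IsGreatest.csSup_eq (a := K)]
  · refine ⟨⟨W₀, hW₀, by simpa using hW₀K⟩, ?_⟩
    rintro _ ⟨W, hW, rfl⟩
    have := hbound (W.restrictScalars F) fun x hx => hW x hx x hx
    rw [hrestrict] at this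
    omega
  · refine ⟨⟨W₀.restrictScalars F, fun x hx => hW₀ x hx x hx, ?_⟩, ?_⟩
    · simp [hrestrict, hW₀K]
    · rintro _ ⟨V, hV, rfl⟩
      exact hbound V hV
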